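/- arXiv:2403.10502 — 3 statements merged into one kernel-verified Lean document; each statement's English description precedes it below -/
import Mathlib

section
/- Let A, B ⊆ W with P(A) > 0. (Information gain of expansion) If P(A ∩ B) > 0 then κ_S(A ∩ B) − κ_S(A) = −log₂(P(A ∩ B) / P(A)), i.e. minus the binary logarithm of the conditional probability of B given A. (Information change of revision) If A⁺ ∩ B = ∅ and B ∩ X ≠ ∅ then κ_S(R(A,B)) − κ_S(A) = log₂(P(A) / P(Max_P(B ∩ X))); and if A⁺ ∩ B ≠ ∅ then κ_S(R(A,B)) − κ_S(A) = −log₂(P(A ∩ B) / P(A)). -/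
open scoped Classical

/-- The probability of a set of worlds: the sum of the probabilities of its elements. -/
noncomputable def Pr {W : Type*} [Fintype W] (P : W → ℝ) (A : Set W) : ℝ :=
  ∑ w, Set.indicator A P w

/-- The set of possible worlds: those with positive probability. -/
def poss {W : Type*} (P : W → ℝ) : Set W := {w | 0 < P w}

/-- The probability-maximal elements of a set of worlds. -/
def MaxP {W : Type*} (P : W → ℝ) (S : Set W) : Set W :=
  {w ∈ S | ∀ w' ∈ S, P w' ≤ P w}

/-- The KM-revision of `A` by `B` (the Levi-identity revision). -/
noncomputable def Rkm {W : Type*} (P : W → ℝ) (A B : Set W) : Set W :=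
  if A ∩ poss P ∩ B = ∅ then MaxP P (B ∩ poss P) else A ∩ poss P ∩ B

/-- The Shannon knowledge measure of a set of worlds. -/
noncomputable def kS {W : Type*} [Fintype W] (P : W → ℝ) (A : Set W) : ℝ :=
  -Real.logb 2 (Pr P A)


lemma Pr_pos_of_mem {W : Type*} [Fintype W] (P : W → ℝ) (hP0 : ∀ w, 0 ≤ P w)
    {A : Set W} {w : W} (hw : w ∈ A) (hpw : 0 < P w) : 0 < Pr P A := by
  classical
  have : Set.indicator A P w = P w := Set.indicator_of_mem hw P
  calc (0:ℝ) < P w := hpw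
    _ = Set.indicator A P w := this.symm
    _ ≤ ∑ v, Set.indicator A P v := by
        apply Finset.single_le_sum (fun v _ => Set.indicator_nonneg (fun x _ => hP0 x) v)
        exact Finset.mem_univ w

lemma Pr_inter_poss {W : Type*} [Fintype W] (P : W → ℝ) (hP0 : ∀ w, 0 ≤ P w)
    (A B : Set W) : Pr P (A ∩ poss P ∩ B) = Pr P (A ∩ B) := by
  classical
  unfold Pr
  apply Finset.sum_congr rfl
  intro w _
  by_cases hw : 0 < P w
  · by_cases hAB : w ∈ A ∩ B
    · rw [Set.indicator_of_mem hAB, Set.indicator_of_mem (show w ∈ A ∩ poss P ∩ B from ⟨⟨hAB.1, hw⟩, hAB.2⟩)]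
    · rw [Set.indicator_of_notMem hAB, Set.indicator_of_notMem
        (fun h => hAB ⟨h.1.1, h.2⟩)]
  · have hz : P w = 0 := le_antisymm (not_lt.1 hw) (hP0 w)
    by_cases hAB : w ∈ A ∩ B
    · rw [Set.indicator_of_mem hAB, Set.indicator_of_notMem
        (fun h => hw h.1.2), hz]
    · rw [Set.indicator_of_notMem hAB, Set.indicator_of_notMem
        (fun h => hAB ⟨h.1.1, h.2⟩)]

/-- Information gain of expansion and information change of revision. -/
theorem information_gain_expansion_and_change_revision
    {W : Type*} [Fintype W] [Nonempty W] (P : W → ℝ)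
    (hP0 : ∀ w, 0 ≤ P w) (hP1 : ∑ w, P w = 1)
    (A B : Set W) (hPA : 0 < Pr P A) :
    (0 < Pr P (A ∩ B) →
      kS P (A ∩ B) - kS P A = -Real.logb 2 (Pr P (A ∩ B) / Pr P A)) ∧
    (A ∩ poss P ∩ B = ∅ → (B ∩ poss P).Nonempty →
      kS P (Rkm P A B) - kS P A
        = Real.logb 2 (Pr P A / Pr P (MaxP P (B ∩ poss P)))) ∧
    (A ∩ poss P ∩ B ≠ ∅ →
      kS P (Rkm P A B) - kS P A = -Real.logb 2 (Pr P (A ∩ B) / Pr P A)) := by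
  refine ⟨?_, ?_, ?_⟩
  · intro hAB
    unfold kS
    rw [Real.logb_div (ne_of_gt hAB) (ne_of_gt hPA)]
    ring
  · intro hemp hne
    have hR : Rkm P A B = MaxP P (B ∩ poss P) := if_pos hemp
    -- MaxP is nonempty and has positive probability
    obtain ⟨m, hm, hmax⟩ := Set.Finite.exists_maximalFor P _ (B ∩ poss P).toFinite hne
    have hmM : m ∈ MaxP P (B ∩ poss P) := by
      refine ⟨hm, fun w' hw' => ?_⟩
      by_contra h
      exact h (hmax hw' (le_of_not_ge h))
    have hposM : 0 < Pr P (MaxP P (B ∩ poss P)) :=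
      Pr_pos_of_mem P hP0 hmM hm.2
    rw [hR]
    unfold kS
    rw [Real.logb_div (ne_of_gt hPA) (ne_of_gt hposM)]
    ring
  · intro hne
    have hR : Rkm P A B = A ∩ poss P ∩ B := if_neg hne
    obtain ⟨w, hw⟩ := Set.nonempty_iff_ne_empty.2 hne
    have hAB : 0 < Pr P (A ∩ B) :=
      Pr_pos_of_mem P hP0 ⟨hw.1.1, hw.2⟩ hw.1.2
    rw [hR]
    unfold kS
    rw [Pr_inter_poss P hP0 A B,
      Real.logb_div (ne_of_gt hAB) (ne_of_gt hPA)]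
    ring
end

section
/- Let A, Bα, Bψ ⊆ W with A⁺ ≠ ∅, Bα ∩ X ≠ ∅ and Bψ ∩ X ≠ ∅. The KM-revision R satisfies the Darwiche–Pearl postulates (C1), (C3) and (C4): (C1) if Bψ ∩ X ⊆ Bα then R(R(A,Bα), Bψ) = R(A,Bψ); (C3) if R(A,Bψ) ⊆ Bα then R(R(A,Bα), Bψ) ⊆ Bα; (C4) if R(A,Bψ) ∩ Bα ≠ ∅ then R(R(A,Bα), Bψ) ∩ Bα ≠ ∅. -/
open scoped Classical

lemma MaxP_nonempty {W : Type*} [Fintype W] (P : W → ℝ) {S : Set W}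
    (hS : S.Nonempty) : (MaxP P S).Nonempty := by
  obtain ⟨a, ha, hmax⟩ := Set.exists_max_image S P (Set.toFinite S) hS
  exact ⟨a, ha, hmax⟩

lemma MaxP_subset {W : Type*} (P : W → ℝ) (S : Set W) : MaxP P S ⊆ S :=
  fun w hw => hw.1

lemma Rkm_subset {W : Type*} (P : W → ℝ) (A B : Set W) :
    Rkm P A B ⊆ B ∩ poss P := by
  unfold Rkm
  split_ifs with h
  · exact MaxP_subset P _
  · intro w hw; exact ⟨hw.2, hw.1.2⟩

lemma Rkm_nonempty {W : Type*} [Fintype W] (P : W → ℝ) (A B : Set W)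
    (hB : (B ∩ poss P).Nonempty) : (Rkm P A B).Nonempty := by
  unfold Rkm
  split_ifs with h
  · exact MaxP_nonempty P hB
  · exact Set.nonempty_iff_ne_empty.2 h

/-- The KM-revision operator satisfies the Darwiche–Pearl iterated revision postulates
(C1), (C3) and (C4); since revision outputs are contained in the set of possible worlds,
P-equivalence and P-entailment reduce to equality and inclusion. -/
theorem KMrevision_satisfies_DP_C1_C3_C4
    {W : Type*} [Fintype W] [Nonempty W] (P : W → ℝ)
    (hP0 : ∀ w, 0 ≤ P w) (hP1 : ∑ w, P w = 1)
    (A Ba Bp : Set W) (hA : (A ∩ poss P).Nonempty)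
    (hBa : (Ba ∩ poss P).Nonempty) (hBp : (Bp ∩ poss P).Nonempty) :
    -- (C1)
    (Bp ∩ poss P ⊆ Ba → Rkm P (Rkm P A Ba) Bp = Rkm P A Bp) ∧
    -- (C3)
    (Rkm P A Bp ⊆ Ba → Rkm P (Rkm P A Ba) Bp ⊆ Ba) ∧
    -- (C4)
    ((Rkm P A Bp ∩ Ba).Nonempty → (Rkm P (Rkm P A Ba) Bp ∩ Ba).Nonempty) := by
  set R1 := Rkm P A Ba with hR1def
  have hR1sub : R1 ⊆ Ba ∩ poss P := Rkm_subset P A Ba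
  have hR1poss : R1 ∩ poss P = R1 := by
    apply Set.inter_eq_self_of_subset_left
    exact fun w hw => (hR1sub hw).2
  have hR1sub' : R1 ⊆ Ba := fun w hw => (hR1sub hw).1
  have hR2 : Rkm P R1 Bp = if R1 ∩ Bp = ∅ then MaxP P (Bp ∩ poss P) else R1 ∩ Bp := by
    unfold Rkm
    rw [hR1poss]
  refine ⟨?_, ?_, ?_⟩
  · -- C1
    intro hsub
    have hABp : A ∩ poss P ∩ Bp = A ∩ poss P ∩ Ba ∩ Bp := by
      ext w
      constructor
      · rintro ⟨⟨hwA, hwX⟩, hwp⟩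
        exact ⟨⟨⟨hwA, hwX⟩, hsub ⟨hwp, hwX⟩⟩, hwp⟩
      · rintro ⟨⟨h1, _⟩, h2⟩; exact ⟨h1, h2⟩
    by_cases hc : A ∩ poss P ∩ Ba = ∅
    · -- R1 = Max(Ba ∩ X)
      have hR1eq : R1 = MaxP P (Ba ∩ poss P) := by rw [hR1def]; unfold Rkm; rw [if_pos hc]
      have hApBp : A ∩ poss P ∩ Bp = ∅ := by
        rw [hABp]
        apply Set.eq_empty_of_subset_empty
        intro w hw
        rw [← hc]; exact hw.1
      have hRABp : Rkm P A Bp = MaxP P (Bp ∩ poss P) := by unfold Rkm; rw [if_pos hApBp]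
      rw [hR2, hRABp]
      split_ifs with h2
      · rfl
      · -- R1 ∩ Bp nonempty, show = Max(Bp∩X)
        obtain ⟨w, hwR1, hwp⟩ := Set.nonempty_iff_ne_empty.2 h2
        ext u
        constructor
        · rintro ⟨huR1, hup⟩
          rw [hR1eq] at huR1
          refine ⟨⟨hup, huR1.1.2⟩, ?_⟩
          intro w' hw'
          exact huR1.2 w' ⟨hsub hw', hw'.2⟩
        · rintro ⟨hu, humax⟩
          rw [hR1eq] at hwR1
          have hwBpX : w ∈ Bp ∩ poss P := ⟨hwp, hwR1.1.2⟩
          have h1 : P w ≤ P u := humax w hwBpX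
          have huBa : u ∈ Ba ∩ poss P := ⟨hsub hu, hu.2⟩
          have h2' : P u ≤ P w := hwR1.2 u huBa
          have heq : P u = P w := le_antisymm h2' h1
          refine ⟨?_, hu.1⟩
          rw [hR1eq]
          exact ⟨huBa, fun w' hw' => heq ▸ (hwR1.2 w' hw')⟩
    · -- R1 = A⁺ ∩ Ba
      have hR1eq : R1 = A ∩ poss P ∩ Ba := by rw [hR1def]; unfold Rkm; rw [if_neg hc]
      have hkey : R1 ∩ Bp = A ∩ poss P ∩ Bp := by
        rw [hR1eq, hABp]
      rw [hR2, hkey]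
      unfold Rkm
      rfl
  · -- C3
    intro hsub
    rw [hR2]
    split_ifs with h2
    · -- R1 ∩ Bp = ∅; show Max(Bp∩X) ⊆ Ba
      by_cases hc : A ∩ poss P ∩ Bp = ∅
      · have : Rkm P A Bp = MaxP P (Bp ∩ poss P) := by unfold Rkm; rw [if_pos hc]
        rw [← this]; exact hsub
      · exfalso
        have hRA : Rkm P A Bp = A ∩ poss P ∩ Bp := by unfold Rkm; rw [if_neg hc]
        obtain ⟨w, hw⟩ := Set.nonempty_iff_ne_empty.2 hc
        have hwBa : w ∈ Ba := hsub (hRA ▸ hw)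
        have hcne : A ∩ poss P ∩ Ba ≠ ∅ := by
          apply Set.nonempty_iff_ne_empty.1
          exact ⟨w, hw.1, hwBa⟩
        have hR1eq : R1 = A ∩ poss P ∩ Ba := by rw [hR1def]; unfold Rkm; rw [if_neg hcne]
        have : w ∈ R1 ∩ Bp := by rw [hR1eq]; exact ⟨⟨hw.1, hwBa⟩, hw.2⟩
        rw [h2] at this; exact this
    · intro w hw; exact hR1sub' hw.1
  · -- C4
    intro hne
    rw [hR2]
    split_ifs with h2
    · by_cases hc : A ∩ poss P ∩ Bp = ∅
      · have : Rkm P A Bp = MaxP P (Bp ∩ poss P) := by unfold Rkm; rw [if_pos hc]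
        rw [← this]; exact hne
      · exfalso
        have hRA : Rkm P A Bp = A ∩ poss P ∩ Bp := by unfold Rkm; rw [if_neg hc]
        obtain ⟨w, hwR, hwBa⟩ := hne
        rw [hRA] at hwR
        have hcne : A ∩ poss P ∩ Ba ≠ ∅ := by
          apply Set.nonempty_iff_ne_empty.1
          exact ⟨w, hwR.1, hwBa⟩
        have hR1eq : R1 = A ∩ poss P ∩ Ba := by rw [hR1def]; unfold Rkm; rw [if_neg hcne]
        have : w ∈ R1 ∩ Bp := by rw [hR1eq]; exact ⟨⟨hwR.1, hwBa⟩, hwR.2⟩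
        rw [h2] at this; exact this
    · obtain ⟨w, hw⟩ := Set.nonempty_iff_ne_empty.2 h2
      exact ⟨w, hw, hR1sub' hw.1⟩
end

section
/- There exist a finite nonempty set W, a probability distribution P on W, and sets A, Bα, Bψ ⊆ W with A⁺ ≠ ∅, Bα ∩ X ≠ ∅, Bψ ∩ X ≠ ∅ and Bψ ∩ X ⊆ W ∖ Bα (i.e., ψ P-entails ¬α), such that R(R(A,Bα), Bψ) ≠ R(A,Bψ). Hence the KM-revision operator does not in general satisfy the Darwiche–Pearl postulate (C2). (A witness: W the truth assignments over letters {p,q} with P(pq̄) = 0.6, P(pq) = 0.2, P(p̄q̄) = 0.1, P(p̄q) = 0.1; A = {pq, p̄q̄}, Bψ = {pq, pq̄}, Bα = {p̄q}.) -/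
open scoped Classical

/-- The KM-revision operator does not in general satisfy the Darwiche–Pearl
postulate (C2): there is a finite nonempty set of worlds, a probability distribution,
and a belief together with two revision inputs -- the second P-entailing the negation
of the first -- on which iterating the revisions differs from revising directly. -/
theorem KMrevision_fails_DP_C2 :
    ∃ (W : Type) (inst : Fintype W) (P : W → ℝ) (A Ba Bp : Set W),
      Nonempty W ∧
      (∀ w, 0 ≤ P w) ∧
      (∑ w ∈ @Finset.univ W inst, P w) = 1 ∧
      (A ∩ poss P).Nonempty ∧
      (Ba ∩ poss P).Nonempty ∧
      (Bp ∩ poss P).Nonempty ∧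
      Bp ∩ poss P ⊆ Set.univ \ Ba ∧
      Rkm P (Rkm P A Ba) Bp ≠ Rkm P A Bp := by
  refine ⟨Fin 4, inferInstance, ![0.6, 0.2, 0.1, 0.1], {1, 2}, {3}, {0, 1}, ⟨0⟩, ?_, ?_, ?_, ?_, ?_, ?_, ?_⟩
  · intro w; fin_cases w <;> norm_num
  · rw [Fin.sum_univ_four]; show (0.6:ℝ) + 0.2 + 0.1 + 0.1 = 1; norm_num
  · exact ⟨1, by simp [poss]; norm_num⟩
  · exact ⟨3, by simp [poss]; norm_num⟩
  · exact ⟨0, by simp [poss]; norm_num⟩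
  · intro w hw
    fin_cases w <;> simp_all [poss] <;> norm_num
  · have hposs : poss ![(0.6:ℝ), 0.2, 0.1, 0.1] = Set.univ := by
      ext w; simp only [poss, Set.mem_setOf_eq, Set.mem_univ, iff_true]
      fin_cases w <;> norm_num
    have h1 : ({1, 2} : Set (Fin 4)) ∩ poss ![(0.6:ℝ), 0.2, 0.1, 0.1] ∩ {3} = ∅ := by
      rw [hposs]; ext w; fin_cases w <;> simp
    have h2 : ({3} : Set (Fin 4)) ∩ poss ![(0.6:ℝ), 0.2, 0.1, 0.1] = {3} := by
      rw [hposs]; simp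
    have hR1 : Rkm ![(0.6:ℝ), 0.2, 0.1, 0.1] {1, 2} {3} = MaxP ![(0.6:ℝ), 0.2, 0.1, 0.1] {3} := by
      rw [Rkm, if_pos h1, h2]
    have hMax3 : MaxP ![(0.6:ℝ), 0.2, 0.1, 0.1] ({3} : Set (Fin 4)) = {3} := by
      ext w; constructor
      · rintro ⟨hw, _⟩; exact hw
      · rintro rfl; exact ⟨rfl, by rintro w' rfl; exact le_refl _⟩
    have h3 : ({3} : Set (Fin 4)) ∩ poss ![(0.6:ℝ), 0.2, 0.1, 0.1] ∩ {0, 1} = ∅ := by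
      rw [hposs]; ext w; fin_cases w <;> simp
    have h4 : ({1, 2} : Set (Fin 4)) ∩ poss ![(0.6:ℝ), 0.2, 0.1, 0.1] ∩ {0, 1} = {1} := by
      rw [hposs]; ext w; fin_cases w <;> simp
    have hR2 : Rkm ![(0.6:ℝ), 0.2, 0.1, 0.1] (Rkm ![(0.6:ℝ), 0.2, 0.1, 0.1] {1, 2} {3}) {0, 1}
        = MaxP ![(0.6:ℝ), 0.2, 0.1, 0.1] ({0, 1} ∩ poss ![(0.6:ℝ), 0.2, 0.1, 0.1]) := by
      rw [hR1, hMax3, Rkm, if_pos h3]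
    have hR3 : Rkm ![(0.6:ℝ), 0.2, 0.1, 0.1] {1, 2} {0, 1} = ({1} : Set (Fin 4)) := by
      rw [Rkm, if_neg, h4]
      rw [h4]; simp
    rw [hR2, hR3, hposs]
    intro hEq
    have h1mem : (1 : Fin 4) ∈ MaxP ![(0.6:ℝ), 0.2, 0.1, 0.1] ({0, 1} ∩ Set.univ) := by
      rw [hEq]; rfl
    have := h1mem.2 0 (by simp)
    norm_num at this
end
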